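/- arXiv:2406.00493 — 5 statements merged into one kernel-verified Lean document; each statement's English description precedes it below -/
import Mathlib

section
/- Under the stated conditions, the coordinates of β^ω on A satisfy β^ω_A = β̂_A − ξ^ω · (X_AᵀX_A)⁻¹ x_{kA} (y_k − ŷ_k). -/
/-!
Write `r` for the residual of case `k` at the case-weighted fit. Because the columns of `X` are
centred, the intercept equation decouples from the active-set equations and gives
`β₀^ω = ȳ - (1-ω) r / n`, while the active-set equations read
`X_AᵀX_A β^ω_A = X_Aᵀy - λ s_A - (1-ω) r x_{kA}`, i.e. `β^ω_A = β̂_A - (1-ω) r (X_AᵀX_A)⁻¹ x_{kA}`.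
Substituting both into the definition of `r` gives `r (1 - (1-ω) h_kk) = y_k - ŷ_k`, where
centring also splits the hat matrix as `H = 𝟏𝟏ᵀ/n + X_A (X_AᵀX_A)⁻¹ X_Aᵀ`.
-/

open Matrix

namespace Matrix

variable {R ι κ₁ κ₂ : Type*}

theorem mul_mul_transpose_apply [CommSemiring R] [Fintype κ₁] (M : Matrix ι κ₁ R)
    (N : Matrix κ₁ κ₁ R) (i i' : ι) : (M * N * Mᵀ) i i' = M i ⬝ᵥ N *ᵥ M i' := by
  rw [dotProduct_mulVec, mul_apply]
  rfl

theorem hat_fromCols_of_transpose_mul_eq_zero [CommRing R] [Fintype ι] [Fintype κ₁]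
    [Fintype κ₂] [DecidableEq κ₁] [DecidableEq κ₂] (A₁ : Matrix ι κ₁ R) (A₂ : Matrix ι κ₂ R)
    (h₁₂ : A₁ᵀ * A₂ = 0) (h₁ : IsUnit (A₁ᵀ * A₁).det) (h₂ : IsUnit (A₂ᵀ * A₂).det) :
    fromCols A₁ A₂ * ((fromCols A₁ A₂)ᵀ * fromCols A₁ A₂)⁻¹ * (fromCols A₁ A₂)ᵀ =
      A₁ * (A₁ᵀ * A₁)⁻¹ * A₁ᵀ + A₂ * (A₂ᵀ * A₂)⁻¹ * A₂ᵀ := by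
  have h₂₁ : A₂ᵀ * A₁ = 0 := by
    rw [← transpose_transpose (A₂ᵀ * A₁), transpose_mul, transpose_transpose, h₁₂,
      transpose_zero]
  have hunit : IsUnit (A₁ᵀ * A₁) ↔ IsUnit (A₂ᵀ * A₂) := by
    rw [isUnit_iff_isUnit_det, isUnit_iff_isUnit_det]
    exact iff_of_true h₁ h₂
  rw [transpose_fromCols, fromRows_mul_fromCols, h₁₂, h₂₁,
    inv_fromBlocks_zero₂₁_of_isUnit_iff _ _ _ hunit, fromCols_mul_fromBlocks,
    fromCols_mul_fromRows]
  simp only [Matrix.zero_mul, Matrix.mul_zero, neg_zero, add_zero, zero_add]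

end Matrix

section InterceptColumn

variable {ι : Type*} [Fintype ι]

local notation "𝟏" => (replicateCol (Fin 1) (1 : ι → ℝ) : Matrix ι (Fin 1) ℝ)

theorem transpose_mul_self_replicateCol_one :
    𝟏ᵀ * 𝟏 = of fun _ _ => (Fintype.card ι : ℝ) := by
  rw [transpose_replicateCol, replicateRow_mul_replicateCol]
  simp

theorem replicateCol_one_hat_apply [Nonempty ι] (i i' : ι) :
    (𝟏 * (𝟏ᵀ * 𝟏)⁻¹ * 𝟏ᵀ) i i' = (Fintype.card ι : ℝ)⁻¹ := by
  have hinv : (𝟏ᵀ * 𝟏)⁻¹ = of fun _ _ => (Fintype.card ι : ℝ)⁻¹ := by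
    rw [transpose_mul_self_replicateCol_one]
    refine inv_eq_left_inv ?_
    ext i j
    fin_cases i; fin_cases j
    simp [mul_apply]
  rw [hinv, mul_mul_transpose_apply]
  simp [dotProduct, mulVec]

theorem transpose_replicateCol_one_mul_eq_zero {κ : Type*} {X : Matrix ι κ ℝ}
    (hX : ∀ j, ∑ i, X i j = 0) : 𝟏ᵀ * X = 0 := by
  ext
  simp [mul_apply, hX]

theorem hat_fromCols_replicateCol_one_apply [Nonempty ι] {κ : Type*} [Fintype κ] [DecidableEq κ]
    {X : Matrix ι κ ℝ} (hX : ∀ j, ∑ i, X i j = 0) (hinv : IsUnit (Xᵀ * X).det) (i i' : ι) :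
    (fromCols 𝟏 X * ((fromCols 𝟏 X)ᵀ * fromCols 𝟏 X)⁻¹ * (fromCols 𝟏 X)ᵀ) i i' =
      (Fintype.card ι : ℝ)⁻¹ + X i ⬝ᵥ (Xᵀ * X)⁻¹ *ᵥ X i' := by
  rw [hat_fromCols_of_transpose_mul_eq_zero _ _ (transpose_replicateCol_one_mul_eq_zero hX)
    (by simp) hinv, Matrix.add_apply, replicateCol_one_hat_apply, mul_mul_transpose_apply]

end InterceptColumn

namespace Regression

variable {ι κ : Type*} [Fintype κ] {X : Matrix ι κ ℝ} {y : ι → ℝ} {b₀ : ℝ}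
  {b : κ → ℝ}

def residual (X : Matrix ι κ ℝ) (y : ι → ℝ) (b₀ : ℝ) (b : κ → ℝ) : ι → ℝ :=
  fun i => y i - b₀ - (X *ᵥ b) i

theorem residual_eq_residual_subtype {A : Finset κ} {XA : Matrix ι A ℝ}
    (hXA : ∀ i j, XA i j = X i j.1) (hb : ∀ j ∉ A, b j = 0) :
    residual X y b₀ b = residual XA y b₀ (fun j => b j.1) := by
  ext i
  simp only [residual, mulVec, dotProduct]
  rw [← Finset.sum_subset (Finset.subset_univ A) fun j _ hj => by rw [hb j hj, mul_zero],
    ← Finset.sum_coe_sort]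
  simp only [hXA]

variable [Fintype ι] (hX : ∀ j, ∑ i, X i j = 0)
include hX

theorem sum_residual_of_centered :
    ∑ i, residual X y b₀ b i = ∑ i, y i - Fintype.card ι * b₀ := by
  have hXb : ∑ i, (X *ᵥ b) i = 0 := by
    simp only [mulVec, dotProduct]
    rw [Finset.sum_comm]
    simp [← Finset.sum_mul, hX]
  simp [residual, Finset.sum_sub_distrib, hXb]

theorem transpose_mulVec_residual_of_centered :
    Xᵀ *ᵥ residual X y b₀ b = Xᵀ *ᵥ y - (Xᵀ * X) *ᵥ b := by
  have hconst : Xᵀ *ᵥ (fun _ => b₀) = 0 := by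
    ext j
    simp [mulVec, dotProduct, ← Finset.sum_mul, hX]
  have hres : residual X y b₀ b = y - (fun _ => b₀) - X *ᵥ b := rfl
  rw [hres, mulVec_sub, mulVec_sub, hconst, sub_zero, mulVec_mulVec]

/- `h` below is the stationarity condition of the fit in the intercept, with the squared error of
case `k` weighted by `1 - w`; in `coef_eq_of_stationary` it is the one in the coefficients, with
`c = λ s_A` for the Lasso. -/
theorem intercept_eq_of_stationary (k : ι) (w : ℝ)
    (h : -∑ i, residual X y b₀ b i + w * residual X y b₀ b k = 0) :
    b₀ = (∑ i, y i) / Fintype.card ι - w * residual X y b₀ b k / Fintype.card ι := by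
  have hcard : (Fintype.card ι : ℝ) ≠ 0 :=
    Nat.cast_ne_zero.mpr (Fintype.card_pos_iff.mpr ⟨k⟩).ne'
  rw [sum_residual_of_centered hX] at h
  field_simp
  linarith

theorem coef_eq_of_stationary [DecidableEq κ] (hinv : IsUnit (Xᵀ * X).det) (k : ι) (w : ℝ)
    (c : κ → ℝ) (h : -(Xᵀ *ᵥ residual X y b₀ b) + (w * residual X y b₀ b k) • X k = -c) :
    b = (Xᵀ * X)⁻¹ *ᵥ (Xᵀ *ᵥ y - c) - (w * residual X y b₀ b k) • ((Xᵀ * X)⁻¹ *ᵥ X k) := by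
  rw [transpose_mulVec_residual_of_centered hX] at h
  have hGb : (Xᵀ * X) *ᵥ b = Xᵀ *ᵥ y - c - (w * residual X y b₀ b k) • X k := by
    linear_combination h
  rw [← mulVec_smul, ← mulVec_sub, ← hGb, mulVec_mulVec, nonsing_inv_mul _ hinv, one_mulVec]

theorem residual_mul_one_sub_leverage [DecidableEq κ] (hinv : IsUnit (Xᵀ * X).det) (k : ι)
    (w : ℝ) (c : κ → ℝ)
    (h₀ : -∑ i, residual X y b₀ b i + w * residual X y b₀ b k = 0)
    (h : -(Xᵀ *ᵥ residual X y b₀ b) + (w * residual X y b₀ b k) • X k = -c) :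
    residual X y b₀ b k * (1 - w * ((Fintype.card ι : ℝ)⁻¹ + X k ⬝ᵥ (Xᵀ * X)⁻¹ *ᵥ X k)) =
      y k - ((∑ i, y i) / Fintype.card ι + X k ⬝ᵥ (Xᵀ * X)⁻¹ *ᵥ (Xᵀ *ᵥ y - c)) := by
  have hr : residual X y b₀ b k = y k - b₀ - X k ⬝ᵥ b := rfl
  have hb₀ := intercept_eq_of_stationary hX k w h₀
  have hb := congrArg (X k ⬝ᵥ ·) (coef_eq_of_stationary hX hinv k w c h)
  simp only [dotProduct_sub, dotProduct_smul, smul_eq_mul] at hb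
  linear_combination hr - hb₀ - hb

theorem coef_eq_sub_influence [DecidableEq κ] (hinv : IsUnit (Xᵀ * X).det) (k : ι) (w : ℝ)
    (c : κ → ℝ)
    (hden : 1 - w * ((Fintype.card ι : ℝ)⁻¹ + X k ⬝ᵥ (Xᵀ * X)⁻¹ *ᵥ X k) ≠ 0)
    (h₀ : -∑ i, residual X y b₀ b i + w * residual X y b₀ b k = 0)
    (h : -(Xᵀ *ᵥ residual X y b₀ b) + (w * residual X y b₀ b k) • X k = -c) :
    b = (Xᵀ * X)⁻¹ *ᵥ (Xᵀ *ᵥ y - c) -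
      (w / (1 - w * ((Fintype.card ι : ℝ)⁻¹ + X k ⬝ᵥ (Xᵀ * X)⁻¹ *ᵥ X k)) *
        (y k - ((∑ i, y i) / Fintype.card ι + X k ⬝ᵥ (Xᵀ * X)⁻¹ *ᵥ (Xᵀ *ᵥ y - c)))) •
        ((Xᵀ * X)⁻¹ *ᵥ X k) := by
  refine (coef_eq_of_stationary hX hinv k w c h).trans ?_
  congr 2
  rw [← residual_mul_one_sub_leverage hX hinv k w c h₀ h, div_mul_eq_mul_div, eq_div_iff hden]
  ring

end Regression

theorem stmt7_general {n p : ℕ}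
    (X : Matrix (Fin n) (Fin p) ℝ) (y : Fin n → ℝ)
    (lam : ℝ) (k : Fin n) (ω : ℝ)
    (hcent : ∀ j, ∑ i, X i j = 0)
    (A : Finset (Fin p))
    (XA : Matrix (Fin n) {j // j ∈ A} ℝ)
    (hXA : ∀ i (j : {j // j ∈ A}), XA i j = X i j.1)
    (hinv : IsUnit (XAᵀ * XA).det)
    (sA : {j // j ∈ A} → ℝ)
    (betahat : {j // j ∈ A} → ℝ)
    (hbetahat : betahat = (XAᵀ * XA)⁻¹.mulVec (XAᵀ.mulVec y - lam • sA))
    (beta0hat : ℝ) (hbeta0hat : beta0hat = (∑ i, y i) / n)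
    (yhat : Fin n → ℝ) (hyhat : ∀ i, yhat i = beta0hat + ∑ j, XA i j * betahat j)
    (Xt : Matrix (Fin n) (Fin 1 ⊕ {j // j ∈ A}) ℝ)
    (hXt : Xt = Matrix.fromCols (Matrix.of fun _ (_ : Fin 1) => (1:ℝ)) XA)
    (H : Matrix (Fin n) (Fin n) ℝ) (hH : H = Xt * (Xtᵀ * Xt)⁻¹ * Xtᵀ)
    (hden : 1 - (1 - ω) * H k k ≠ 0)
    (ξ : ℝ) (hξ : ξ = (1 - ω) / (1 - (1 - ω) * H k k))
    (β0ω : ℝ) (βω : Fin p → ℝ)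
    (hzero : ∀ j ∉ A, βω j = 0)
    (hd0 : -(∑ i, (y i - β0ω - ∑ j, X i j * βω j))
        + (1 - ω) * (y k - β0ω - ∑ j, X k j * βω j) = 0)
    (hdA : ∀ j : {j // j ∈ A},
        -(∑ i, X i j.1 * (y i - β0ω - ∑ j', X i j' * βω j'))
          + (1 - ω) * X k j.1 * (y k - β0ω - ∑ j', X k j' * βω j') = -lam * sA j) :
    ∀ j : {j // j ∈ A},
      βω j.1 = betahat j
        - ξ * ((XAᵀ * XA)⁻¹.mulVec (fun j' : {j // j ∈ A} => X k j'.1)) j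
            * (y k - yhat k) := by
  have : Nonempty (Fin n) := ⟨k⟩
  set v : {j // j ∈ A} → ℝ := fun j => βω j.1
  have hfit : ∀ i, y i - β0ω - ∑ j, X i j * βω j = Regression.residual XA y β0ω v i :=
    congrFun (Regression.residual_eq_residual_subtype hXA hzero)
  have hcentA : ∀ j, ∑ i, XA i j = 0 := fun j => by simpa only [hXA] using hcent j
  simp only [hfit] at hd0 hdA
  have hdA' : -(XAᵀ *ᵥ Regression.residual XA y β0ω v) +
      ((1 - ω) * Regression.residual XA y β0ω v k) • XA k = -(lam • sA) := by
    ext j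
    simp only [Pi.add_apply, Pi.neg_apply, Pi.smul_apply, smul_eq_mul, mulVec, dotProduct,
      transpose_apply, hXA]
    linear_combination hdA j
  have hHkk : H k k = (n : ℝ)⁻¹ + XA k ⬝ᵥ (XAᵀ * XA)⁻¹ *ᵥ XA k := by
    have hXt' : Xt = fromCols (replicateCol (Fin 1) 1) XA := hXt
    rw [hH, hXt', hat_fromCols_replicateCol_one_apply hcentA hinv, Fintype.card_fin]
  have hyk : yhat k = (∑ i, y i) / n + XA k ⬝ᵥ betahat := by rw [hyhat, hbeta0hat]; rfl
  have hβ := Regression.coef_eq_sub_influence hcentA hinv k (1 - ω) (lam • sA)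
    (by rwa [Fintype.card_fin, ← hHkk]) hd0 hdA'
  rw [← hbetahat, Fintype.card_fin, ← hHkk, ← hyk, ← hξ] at hβ
  have hxk : (fun j : {j // j ∈ A} => X k j.1) = XA k := funext fun j => (hXA k j).symm
  intro j
  rw [hxk]
  simpa [mul_right_comm] using congrFun hβ j

/-- Case-weight adjusted Lasso solution on the active set:
`β^ω_A = β̂_A - ξ^ω (X_AᵀX_A)⁻¹ x_{kA} (y_k - ŷ_k)`. -/
theorem stmt7 {n p : ℕ} (hn : 0 < n) (hp : 0 < p)
    (X : Matrix (Fin n) (Fin p) ℝ) (y : Fin n → ℝ)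
    (lam : ℝ) (hlam : 0 < lam) (k : Fin n) (ω : ℝ) (hω : ω ∈ Set.Icc (0:ℝ) 1)
    (hcent : ∀ j, ∑ i, X i j = 0)
    (A : Finset (Fin p))
    (XA : Matrix (Fin n) {j // j ∈ A} ℝ)
    (hXA : ∀ i (j : {j // j ∈ A}), XA i j = X i j.1)
    (hinv : IsUnit (XAᵀ * XA).det)
    (sA : {j // j ∈ A} → ℝ) (hsA : ∀ j, sA j = 1 ∨ sA j = -1)
    (betahat : {j // j ∈ A} → ℝ)
    (hbetahat : betahat = (XAᵀ * XA)⁻¹.mulVec (XAᵀ.mulVec y - lam • sA))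
    (beta0hat : ℝ) (hbeta0hat : beta0hat = (∑ i, y i) / n)
    (yhat : Fin n → ℝ) (hyhat : ∀ i, yhat i = beta0hat + ∑ j, XA i j * betahat j)
    (Xt : Matrix (Fin n) (Fin 1 ⊕ {j // j ∈ A}) ℝ)
    (hXt : Xt = Matrix.fromCols (Matrix.of fun _ (_ : Fin 1) => (1:ℝ)) XA)
    (H : Matrix (Fin n) (Fin n) ℝ) (hH : H = Xt * (Xtᵀ * Xt)⁻¹ * Xtᵀ)
    (hden : 1 - (1 - ω) * H k k ≠ 0) (hnω : (n : ℝ) - 1 + ω ≠ 0)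
    (ξ : ℝ) (hξ : ξ = (1 - ω) / (1 - (1 - ω) * H k k))
    (β0ω : ℝ) (βω : Fin p → ℝ)
    (hzero : ∀ j ∉ A, βω j = 0)
    (hd0 : -(∑ i, (y i - β0ω - ∑ j, X i j * βω j))
        + (1 - ω) * (y k - β0ω - ∑ j, X k j * βω j) = 0)
    (hdA : ∀ j : {j // j ∈ A},
        -(∑ i, X i j.1 * (y i - β0ω - ∑ j', X i j' * βω j'))
          + (1 - ω) * X k j.1 * (y k - β0ω - ∑ j', X k j' * βω j') = -lam * sA j) :
    ∀ j : {j // j ∈ A},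
      βω j.1 = betahat j
        - ξ * ((XAᵀ * XA)⁻¹.mulVec (fun j' : {j // j ∈ A} => X k j'.1)) j
            * (y k - yhat k) :=
  stmt7_general X y lam k ω hcent A XA hXA hinv sA betahat hbetahat beta0hat hbeta0hat yhat hyhat Xt
    hXt H hH hden ξ hξ β0ω βω hzero hd0 hdA
end

section
/- Under the stated conditions, the intercept satisfies β₀^ω = β̂₀ − ξ^ω (y_k − ŷ_k)/n. -/
/-!
Let `r` be the residual of case `k` at the weighted fit. Since the columns of `X` are centred, the
intercept equation decouples: `n β₀^ω = ∑ yᵢ - (1-ω) r`. The equations on `A` are the normal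
equations of the unweighted fit perturbed by `(1-ω) r x_{kA}`, so
`β_A^ω = β̂_A - (1-ω) r (X_AᵀX_A)⁻¹ x_{kA}`. The intercept column is orthogonal to `X_A`, so
`h_kk = 1/n + x_{kA}ᵀ(X_AᵀX_A)⁻¹x_{kA}`, and substituting everything into
`r = y_k - β₀^ω - x_{kA}ᵀβ_A^ω` gives `r (1 - (1-ω) h_kk) = y_k - ŷ_k`.
-/

open Matrix

section
variable {K m ι : Type*} [Field K]

theorem mulVec_eq_mulVec_subtype [Fintype ι] {A : Finset ι} {X : Matrix m ι K}
    {XA : Matrix m A K} (hXA : ∀ i j, XA i j = X i j.1) {v : ι → K} (hv : ∀ j ∉ A, v j = 0) :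
    X *ᵥ v = XA *ᵥ fun j => v j := by
  funext i
  simp only [mulVec, dotProduct, hXA]
  rw [Finset.sum_coe_sort A fun j => X i j * v j]
  exact (Finset.sum_subset A.subset_univ fun j _ hj => by rw [hv j hj, mul_zero]).symm

theorem mul_mul_transpose_apply_self [Fintype ι] (M : Matrix m ι K) (N : Matrix ι ι K) (k : m) :
    (M * N * Mᵀ) k k = M k ⬝ᵥ N *ᵥ M k := by
  rw [mul_apply', mul_apply_eq_vecMul, dotProduct_mulVec]
  rfl

variable [Fintype m]

theorem transpose_mulVec_const_of_sum_col_eq_zero {M : Matrix m ι K}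
    (hM : ∀ j, ∑ i, M i j = 0) (b : K) : Mᵀ *ᵥ (fun _ => b) = 0 := by
  funext j
  simp [mulVec, dotProduct, ← Finset.sum_mul, hM]

theorem transpose_mul_self_fromCols_one {M : Matrix m ι K} (hM : ∀ j, ∑ i, M i j = 0) :
    (fromCols (of fun _ (_ : Fin 1) => (1 : K)) M)ᵀ * fromCols (of fun _ (_ : Fin 1) => 1) M =
      fromBlocks ((Fintype.card m : K) • 1) 0 0 (Mᵀ * M) := by
  rw [transpose_fromCols, fromRows_mul_fromCols]
  congr 1
  · ext i j
    fin_cases i; fin_cases j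
    simp [mul_apply]
  · ext i j
    simp [mul_apply, hM j]
  · ext i j
    simp [mul_apply, hM i]

variable [Fintype ι]

def fitResidual (M : Matrix m ι K) (y : m → K) (b : K) (v : ι → K) : m → K :=
  fun i => y i - b - (M *ᵥ v) i

variable {M : Matrix m ι K}

theorem sum_mulVec_of_sum_col_eq_zero (hM : ∀ j, ∑ i, M i j = 0) (v : ι → K) :
    ∑ i, (M *ᵥ v) i = 0 := by
  simp only [mulVec, dotProduct]
  rw [Finset.sum_comm]
  simp [← Finset.sum_mul, hM]

theorem sum_fitResidual (hM : ∀ j, ∑ i, M i j = 0) (y : m → K) (b : K) (v : ι → K) :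
    ∑ i, fitResidual M y b v i = ∑ i, y i - Fintype.card m * b := by
  simp [fitResidual, Finset.sum_sub_distrib, sum_mulVec_of_sum_col_eq_zero hM]

theorem transpose_mulVec_fitResidual (hM : ∀ j, ∑ i, M i j = 0) (y : m → K) (b : K)
    (v : ι → K) : Mᵀ *ᵥ fitResidual M y b v = Mᵀ *ᵥ y - (Mᵀ * M) *ᵥ v := by
  have : fitResidual M y b v = y - (fun _ => b) - M *ᵥ v := rfl
  rw [this, mulVec_sub, mulVec_sub, transpose_mulVec_const_of_sum_col_eq_zero hM, sub_zero,
    mulVec_mulVec]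

variable {y : m → K} {b c : K} {v : ι → K} {k : m}

theorem intercept_eq_of_stationary [CharZero K] (hM : ∀ j, ∑ i, M i j = 0)
    (h : -(∑ i, fitResidual M y b v i) + c * fitResidual M y b v k = 0) :
    b = (∑ i, y i) / Fintype.card m - c * fitResidual M y b v k / Fintype.card m := by
  have : Nonempty m := ⟨k⟩
  have hcard : (Fintype.card m : K) ≠ 0 := Nat.cast_ne_zero.2 Fintype.card_ne_zero
  rw [sum_fitResidual hM] at h
  field_simp
  linear_combination h

variable [DecidableEq ι]

theorem coef_eq_of_stationary (hM : ∀ j, ∑ i, M i j = 0) (hG : IsUnit (Mᵀ * M).det)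
    {lam : K} {s : ι → K}
    (h : ∀ j, -(Mᵀ *ᵥ fitResidual M y b v) j + c * M k j * fitResidual M y b v k = -lam * s j) :
    v = (Mᵀ * M)⁻¹ *ᵥ (Mᵀ *ᵥ y - lam • s) - (c * fitResidual M y b v k) • (Mᵀ * M)⁻¹ *ᵥ M k := by
  have normal : (Mᵀ * M) *ᵥ v = Mᵀ *ᵥ y - lam • s - (c * fitResidual M y b v k) • M k := by
    funext j
    have hj := h j
    rw [transpose_mulVec_fitResidual hM] at hj
    simp only [Pi.sub_apply, Pi.smul_apply, smul_eq_mul] at hj ⊢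
    linear_combination hj
  calc v = (Mᵀ * M)⁻¹ *ᵥ ((Mᵀ * M) *ᵥ v) := by
        rw [mulVec_mulVec, nonsing_inv_mul _ hG, one_mulVec]
    _ = _ := by rw [normal, mulVec_sub, mulVec_smul]

theorem fromCols_one_hat_eq [CharZero K] [Nonempty m] (hM : ∀ j, ∑ i, M i j = 0)
    (hG : IsUnit (Mᵀ * M).det) :
    fromCols (of fun _ (_ : Fin 1) => (1 : K)) M *
        ((fromCols (of fun _ (_ : Fin 1) => 1) M)ᵀ * fromCols (of fun _ (_ : Fin 1) => 1) M)⁻¹ *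
        (fromCols (of fun _ (_ : Fin 1) => 1) M)ᵀ =
      (Fintype.card m : K)⁻¹ • of (fun _ _ => 1) + M * (Mᵀ * M)⁻¹ * Mᵀ := by
  have hcard : (Fintype.card m : K) ≠ 0 := Nat.cast_ne_zero.2 Fintype.card_ne_zero
  have hinv : (fromBlocks ((Fintype.card m : K) • 1) 0 0 (Mᵀ * M))⁻¹ =
      fromBlocks ((Fintype.card m : K)⁻¹ • (1 : Matrix (Fin 1) (Fin 1) K)) 0 0 (Mᵀ * M)⁻¹ := by
    refine inv_eq_right_inv ?_
    rw [fromBlocks_multiply, mul_nonsing_inv _ hG]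
    simp [smul_smul, hcard, ← fromBlocks_one]
  rw [transpose_mul_self_fromCols_one hM, hinv, transpose_fromCols, fromCols_mul_fromBlocks,
    fromCols_mul_fromRows]
  ext i j
  simp [mul_apply]

theorem fitResidual_mul_one_sub_hat [CharZero K] (hM : ∀ j, ∑ i, M i j = 0)
    (hG : IsUnit (Mᵀ * M).det) {lam : K} {s : ι → K}
    (h0 : -(∑ i, fitResidual M y b v i) + c * fitResidual M y b v k = 0)
    (hA : ∀ j, -(Mᵀ *ᵥ fitResidual M y b v) j + c * M k j * fitResidual M y b v k = -lam * s j) :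
    fitResidual M y b v k * (1 - c * ((Fintype.card m : K)⁻¹ + M k ⬝ᵥ (Mᵀ * M)⁻¹ *ᵥ M k)) =
      y k - (∑ i, y i) / Fintype.card m - M k ⬝ᵥ (Mᵀ * M)⁻¹ *ᵥ (Mᵀ *ᵥ y - lam • s) := by
  have hb := intercept_eq_of_stationary hM h0
  have hv := coef_eq_of_stationary hM hG hA
  set r := fitResidual M y b v k
  have hr : r = y k - b - M k ⬝ᵥ v := rfl
  rw [hv, hb, dotProduct_sub, dotProduct_smul, smul_eq_mul] at hr
  linear_combination hr

end

theorem stmt8_general {n p : ℕ}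
    (X : Matrix (Fin n) (Fin p) ℝ) (y : Fin n → ℝ)
    (lam : ℝ) (k : Fin n) (ω : ℝ)
    (hcent : ∀ j, ∑ i, X i j = 0)
    (A : Finset (Fin p))
    (XA : Matrix (Fin n) {j // j ∈ A} ℝ)
    (hXA : ∀ i (j : {j // j ∈ A}), XA i j = X i j.1)
    (hinv : IsUnit (XAᵀ * XA).det)
    (sA : {j // j ∈ A} → ℝ)
    (betahat : {j // j ∈ A} → ℝ)
    (hbetahat : betahat = (XAᵀ * XA)⁻¹.mulVec (XAᵀ.mulVec y - lam • sA))
    (beta0hat : ℝ) (hbeta0hat : beta0hat = (∑ i, y i) / n)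
    (yhat : Fin n → ℝ) (hyhat : ∀ i, yhat i = beta0hat + ∑ j, XA i j * betahat j)
    (Xt : Matrix (Fin n) (Fin 1 ⊕ {j // j ∈ A}) ℝ)
    (hXt : Xt = Matrix.fromCols (Matrix.of fun _ (_ : Fin 1) => (1:ℝ)) XA)
    (H : Matrix (Fin n) (Fin n) ℝ) (hH : H = Xt * (Xtᵀ * Xt)⁻¹ * Xtᵀ)
    (hden : 1 - (1 - ω) * H k k ≠ 0)
    (ξ : ℝ) (hξ : ξ = (1 - ω) / (1 - (1 - ω) * H k k))
    (β0ω : ℝ) (βω : Fin p → ℝ)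
    (hzero : ∀ j ∉ A, βω j = 0)
    (hd0 : -(∑ i, (y i - β0ω - ∑ j, X i j * βω j))
        + (1 - ω) * (y k - β0ω - ∑ j, X k j * βω j) = 0)
    (hdA : ∀ j : {j // j ∈ A},
        -(∑ i, X i j.1 * (y i - β0ω - ∑ j', X i j' * βω j'))
          + (1 - ω) * X k j.1 * (y k - β0ω - ∑ j', X k j' * βω j') = -lam * sA j) :
    β0ω = beta0hat - ξ * (y k - yhat k) / n := by
  have hcentA : ∀ j, ∑ i, XA i j = 0 := fun j => by simpa only [hXA] using hcent j
  have hres : ∀ i, y i - β0ω - ∑ j, X i j * βω j = fitResidual XA y β0ω (fun j => βω j) i :=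
    fun i => by rw [fitResidual, ← mulVec_eq_mulVec_subtype hXA hzero]; rfl
  simp only [hres, ← hXA] at hd0 hdA
  have : Nonempty (Fin n) := ⟨k⟩
  have hHkk : H k k = (n : ℝ)⁻¹ + XA k ⬝ᵥ (XAᵀ * XA)⁻¹ *ᵥ XA k := by
    rw [hH, hXt, fromCols_one_hat_eq hcentA hinv, Matrix.add_apply, Matrix.smul_apply, of_apply, smul_eq_mul, mul_one, Fintype.card_fin,
      mul_mul_transpose_apply_self]
  have hr := fitResidual_mul_one_sub_hat hcentA hinv hd0 hdA
  rw [Fintype.card_fin, ← hHkk, ← hbeta0hat, ← hbetahat] at hr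
  have hyk : yhat k = beta0hat + XA k ⬝ᵥ betahat := hyhat k
  rw [intercept_eq_of_stationary hcentA hd0, Fintype.card_fin, ← hbeta0hat, hξ, hyk,
    sub_add_eq_sub_sub, ← hr]
  field_simp

/-- Case-weight adjusted Lasso intercept: `β₀^ω = β̂₀ - ξ^ω (y_k - ŷ_k)/n`. -/
theorem stmt8 {n p : ℕ} (hn : 0 < n) (hp : 0 < p)
    (X : Matrix (Fin n) (Fin p) ℝ) (y : Fin n → ℝ)
    (lam : ℝ) (hlam : 0 < lam) (k : Fin n) (ω : ℝ) (hω : ω ∈ Set.Icc (0:ℝ) 1)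
    (hcent : ∀ j, ∑ i, X i j = 0)
    (A : Finset (Fin p))
    (XA : Matrix (Fin n) {j // j ∈ A} ℝ)
    (hXA : ∀ i (j : {j // j ∈ A}), XA i j = X i j.1)
    (hinv : IsUnit (XAᵀ * XA).det)
    (sA : {j // j ∈ A} → ℝ) (hsA : ∀ j, sA j = 1 ∨ sA j = -1)
    (betahat : {j // j ∈ A} → ℝ)
    (hbetahat : betahat = (XAᵀ * XA)⁻¹.mulVec (XAᵀ.mulVec y - lam • sA))
    (beta0hat : ℝ) (hbeta0hat : beta0hat = (∑ i, y i) / n)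
    (yhat : Fin n → ℝ) (hyhat : ∀ i, yhat i = beta0hat + ∑ j, XA i j * betahat j)
    (Xt : Matrix (Fin n) (Fin 1 ⊕ {j // j ∈ A}) ℝ)
    (hXt : Xt = Matrix.fromCols (Matrix.of fun _ (_ : Fin 1) => (1:ℝ)) XA)
    (H : Matrix (Fin n) (Fin n) ℝ) (hH : H = Xt * (Xtᵀ * Xt)⁻¹ * Xtᵀ)
    (hden : 1 - (1 - ω) * H k k ≠ 0) (hnω : (n : ℝ) - 1 + ω ≠ 0)
    (ξ : ℝ) (hξ : ξ = (1 - ω) / (1 - (1 - ω) * H k k))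
    (β0ω : ℝ) (βω : Fin p → ℝ)
    (hzero : ∀ j ∉ A, βω j = 0)
    (hd0 : -(∑ i, (y i - β0ω - ∑ j, X i j * βω j))
        + (1 - ω) * (y k - β0ω - ∑ j, X k j * βω j) = 0)
    (hdA : ∀ j : {j // j ∈ A},
        -(∑ i, X i j.1 * (y i - β0ω - ∑ j', X i j' * βω j'))
          + (1 - ω) * X k j.1 * (y k - β0ω - ∑ j', X k j' * βω j') = -lam * sA j) :
    β0ω = beta0hat - ξ * (y k - yhat k) / n :=
  stmt8_general X y lam k ω hcent A XA hXA hinv sA betahat hbetahat beta0hat hbeta0hat yhat hyhat Xt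
    hXt H hH hden ξ hξ β0ω βω hzero hd0 hdA
end

section
/- Under the stated conditions, the fitted value vector ŷ^ω := β₀^ω 1ₙ + X β^ω satisfies ŷ^ω = ŷ − ξ^ω · h_{·k} (y_k − ŷ_k). -/
/-!
With `X̃ = (1, X_A)` and `H = X̃ (X̃ᵀX̃)⁻¹ X̃ᵀ`, the difference `d = ŷ - ŷ^ω` of the two fits lies
in the column space of `X̃`, so `H d = d`. Subtracting the stationarity conditions of the two
problems, `X̃ᵀ(y - ŷ) = (0, λ s_A)` and `X̃ᵀ(y - ŷ^ω) = (1 - ω) e_k x̃_k + (0, λ s_A)` with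
`e = y - ŷ^ω`, gives `X̃ᵀ d = (1 - ω) e_k x̃_k`, hence `d = H d = (1 - ω) e_k h_{·k}`.
Reading this at the `k`th coordinate, `e_k - (y_k - ŷ_k) = (1 - ω) e_k h_kk`, which solves to
`(1 - ω) e_k = ξ^ω (y_k - ŷ_k)`.
-/

open Matrix

namespace Matrix

variable {m q R : Type*}

noncomputable def hatMatrix [Fintype m] [Fintype q] [DecidableEq q] [CommRing R]
    (Z : Matrix m q R) : Matrix m m R :=
  Z * (Zᵀ * Z)⁻¹ * Zᵀ

def interceptDesign [One R] (Z : Matrix m q R) : Matrix m (Fin 1 ⊕ q) R :=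
  fromCols (of fun _ _ => 1) Z

theorem mulVec_eq_smul_hatMatrix_col [Fintype m] [Fintype q] [DecidableEq q] [CommRing R]
    {Z : Matrix m q R} (hZ : IsUnit (Zᵀ * Z).det) {w : q → R} {c : R} {k : m}
    (h : Zᵀ *ᵥ (Z *ᵥ w) = c • Z k) :
    Z *ᵥ w = c • fun i => hatMatrix Z i k := by
  have hcol : (fun i => hatMatrix Z i k) = (Z * (Zᵀ * Z)⁻¹) *ᵥ Z k := by
    ext i
    simp [hatMatrix, mul_apply, mulVec, dotProduct]
  calc Z *ᵥ w = (Z * (Zᵀ * Z)⁻¹) *ᵥ (Zᵀ *ᵥ (Z *ᵥ w)) := by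
        simp only [mulVec_mulVec, Matrix.mul_assoc, nonsing_inv_mul _ hZ, Matrix.mul_one]
    _ = c • fun i => hatMatrix Z i k := by rw [h, mulVec_smul, hcol]

theorem interceptDesign_mulVec_sumElim [Fintype q] [CommRing R] (Z : Matrix m q R) (b₀ : R)
    (b : q → R) (i : m) :
    (interceptDesign Z *ᵥ Sum.elim (fun _ => b₀) b) i = b₀ + ∑ j, Z i j * b j := by
  simp [interceptDesign, mulVec, dotProduct]

theorem interceptDesign_transpose_mulVec_inl [Fintype m] [CommRing R] (Z : Matrix m q R)
    (v : m → R) (a : Fin 1) : ((interceptDesign Z)ᵀ *ᵥ v) (Sum.inl a) = ∑ i, v i := by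
  simp [interceptDesign, mulVec, dotProduct]

theorem interceptDesign_transpose_mulVec_inr [Fintype m] [CommRing R] (Z : Matrix m q R)
    (v : m → R) (j : q) : ((interceptDesign Z)ᵀ *ᵥ v) (Sum.inr j) = ∑ i, Z i j * v i := by
  simp [interceptDesign, mulVec, dotProduct]

theorem interceptDesign_transpose_mul_self [Fintype m] [CommRing R] {Z : Matrix m q R}
    (hZ : ∀ j, ∑ i, Z i j = 0) :
    (interceptDesign Z)ᵀ * interceptDesign Z =
      fromBlocks (of fun _ _ => (Fintype.card m : R)) 0 0 (Zᵀ * Z) := by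
  have h1Z : (of fun _ _ => 1 : Matrix m (Fin 1) R)ᵀ * Z = 0 := by
    ext a j
    simp [mul_apply, hZ]
  have hZ1 : Zᵀ * (of fun _ _ => 1 : Matrix m (Fin 1) R) = 0 := by
    rw [← transpose_transpose (Zᵀ * _), transpose_mul, transpose_transpose, h1Z, transpose_zero]
  rw [interceptDesign, transpose_fromCols, fromRows_mul_fromCols, h1Z, hZ1]
  congr 1
  ext a b
  simp [mul_apply]

theorem isUnit_det_interceptDesign_transpose_mul_self [Fintype m] [Fintype q] [DecidableEq q]
    [Field R] {Z : Matrix m q R} (hm : (Fintype.card m : R) ≠ 0) (hZ : ∀ j, ∑ i, Z i j = 0)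
    (hinv : IsUnit (Zᵀ * Z).det) :
    IsUnit ((interceptDesign Z)ᵀ * interceptDesign Z).det := by
  rw [interceptDesign_transpose_mul_self hZ, det_fromBlocks_zero₂₁, det_unique]
  exact (isUnit_iff_ne_zero.mpr hm).mul hinv

/-- Stationarity of the unweighted solution `(ȳ, β̂_A)` in the intercept model. -/
theorem interceptDesign_transpose_mulVec_lasso_residual [Fintype m] [Fintype q] [DecidableEq q]
    [Field R] {Z : Matrix m q R} (hm : (Fintype.card m : R) ≠ 0) (hZ : ∀ j, ∑ i, Z i j = 0)
    (hinv : IsUnit (Zᵀ * Z).det) (y : m → R) (lam : R) (s : q → R) :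
    (interceptDesign Z)ᵀ *ᵥ (y - interceptDesign Z *ᵥ
        Sum.elim (fun _ => (∑ i, y i) / Fintype.card m) ((Zᵀ * Z)⁻¹ *ᵥ (Zᵀ *ᵥ y - lam • s))) =
      Sum.elim (0 : Fin 1 → R) (lam • s) := by
  rw [mulVec_sub, mulVec_mulVec, interceptDesign_transpose_mul_self hZ, fromBlocks_mulVec]
  ext (a | j)
  · simp [interceptDesign, transpose_fromCols, mulVec, dotProduct]
    field_simp
    ring
  · simp [interceptDesign, transpose_fromCols, mulVec_mulVec, mul_nonsing_inv _ hinv]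

theorem interceptDesign_transpose_mulVec_of_stationarity [Fintype m] [CommRing R]
    {Z : Matrix m q R} {e : m → R} {c lam : R} {s : q → R} {k : m}
    (h₀ : -(∑ i, e i) + c * e k = 0)
    (hA : ∀ j, -(∑ i, Z i j * e i) + c * Z k j * e k = -lam * s j) :
    (interceptDesign Z)ᵀ *ᵥ e =
      (c * e k) • interceptDesign Z k + Sum.elim (0 : Fin 1 → R) (lam • s) := by
  ext (a | j)
  · rw [interceptDesign_transpose_mulVec_inl]
    simp only [Pi.add_apply, Pi.smul_apply, smul_eq_mul, Sum.elim_inl, Pi.zero_apply,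
      interceptDesign, fromCols_apply_inl, of_apply]
    linear_combination -h₀
  · rw [interceptDesign_transpose_mulVec_inr]
    simp only [Pi.add_apply, Pi.smul_apply, smul_eq_mul, Sum.elim_inr, interceptDesign,
      fromCols_apply_inr]
    linear_combination -hA j

end Matrix

theorem stmt9_general {n p : ℕ}
    (X : Matrix (Fin n) (Fin p) ℝ) (y : Fin n → ℝ)
    (lam : ℝ) (k : Fin n) (ω : ℝ)
    (hcent : ∀ j, ∑ i, X i j = 0)
    (A : Finset (Fin p))
    (XA : Matrix (Fin n) {j // j ∈ A} ℝ)
    (hXA : ∀ i (j : {j // j ∈ A}), XA i j = X i j.1)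
    (hinv : IsUnit (XAᵀ * XA).det)
    (sA : {j // j ∈ A} → ℝ)
    (betahat : {j // j ∈ A} → ℝ)
    (hbetahat : betahat = (XAᵀ * XA)⁻¹.mulVec (XAᵀ.mulVec y - lam • sA))
    (beta0hat : ℝ) (hbeta0hat : beta0hat = (∑ i, y i) / n)
    (yhat : Fin n → ℝ) (hyhat : ∀ i, yhat i = beta0hat + ∑ j, XA i j * betahat j)
    (Xt : Matrix (Fin n) (Fin 1 ⊕ {j // j ∈ A}) ℝ)
    (hXt : Xt = Matrix.fromCols (Matrix.of fun _ (_ : Fin 1) => (1:ℝ)) XA)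
    (H : Matrix (Fin n) (Fin n) ℝ) (hH : H = Xt * (Xtᵀ * Xt)⁻¹ * Xtᵀ)
    (hden : 1 - (1 - ω) * H k k ≠ 0)
    (ξ : ℝ) (hξ : ξ = (1 - ω) / (1 - (1 - ω) * H k k))
    (β0ω : ℝ) (βω : Fin p → ℝ)
    (hzero : ∀ j ∉ A, βω j = 0)
    (hd0 : -(∑ i, (y i - β0ω - ∑ j, X i j * βω j))
        + (1 - ω) * (y k - β0ω - ∑ j, X k j * βω j) = 0)
    (hdA : ∀ j : {j // j ∈ A},
        -(∑ i, X i j.1 * (y i - β0ω - ∑ j', X i j' * βω j'))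
          + (1 - ω) * X k j.1 * (y k - β0ω - ∑ j', X k j' * βω j') = -lam * sA j) :
    ∀ i, β0ω + ∑ j, X i j * βω j = yhat i - ξ * H i k * (y k - yhat k) := by
  have hcard : (Fintype.card (Fin n) : ℝ) ≠ 0 := by simpa using k.pos.ne'
  have hcentA : ∀ j, ∑ i, XA i j = 0 := fun j => by simp only [hXA, hcent]
  replace hXt : Xt = interceptDesign XA := hXt
  set γ : Fin 1 ⊕ A → ℝ := Sum.elim (fun _ => beta0hat) betahat
  set γω : Fin 1 ⊕ A → ℝ := Sum.elim (fun _ => β0ω) (fun j => βω j)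
  have hfit : yhat = Xt *ᵥ γ := funext fun i => by
    rw [hyhat, hXt, interceptDesign_mulVec_sumElim]
  have hfitω : ∀ i, β0ω + ∑ j, X i j * βω j = (Xt *ᵥ γω) i := fun i => by
    rw [hXt, interceptDesign_mulVec_sumElim,
      ← Finset.sum_subset A.subset_univ fun j _ hj => by rw [hzero j hj, mul_zero],
      ← Finset.sum_coe_sort]
    simp only [hXA]
  have hKKT : Xtᵀ *ᵥ (y - yhat) = Sum.elim (0 : Fin 1 → ℝ) (lam • sA) := by
    have := interceptDesign_transpose_mulVec_lasso_residual hcard hcentA hinv y lam sA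
    rwa [Fintype.card_fin, ← hbeta0hat, ← hbetahat, ← hXt, ← hfit] at this
  simp only [sub_sub, hfitω, ← hXA] at hd0 hdA
  set e := y - Xt *ᵥ γω
  have hKKTω := hXt ▸ interceptDesign_transpose_mulVec_of_stationarity (e := e) hd0 hdA
  have hdiff : Xt *ᵥ (γ - γω) = ((1 - ω) * e k) • fun i => H i k := by
    rw [hH]
    refine mulVec_eq_smul_hatMatrix_col
      (hXt ▸ isUnit_det_interceptDesign_transpose_mul_self hcard hcentA hinv) ?_
    rw [mulVec_sub, ← hfit, ← sub_sub_sub_cancel_left _ _ y, mulVec_sub, hKKTω, hKKT,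
      add_sub_cancel_right]
  have hξ' : ξ * (1 - (1 - ω) * H k k) = 1 - ω := by rw [hξ, div_mul_cancel₀ _ hden]
  intro i
  have hdi := congrFun hdiff i
  have hdk := congrFun hdiff k
  simp only [mulVec_sub, Pi.sub_apply, Pi.smul_apply, smul_eq_mul, ← hfit, e] at hdi hdk
  rw [hfitω]
  linear_combination -hdi - (ξ * H i k) * hdk + (H i k * (y k - (Xt *ᵥ γω) k)) * hξ'

/-- Case-weight adjusted Lasso fitted values: `ŷ^ω = ŷ - ξ^ω h_{·k} (y_k - ŷ_k)`. -/
theorem stmt9 {n p : ℕ} (hn : 0 < n) (hp : 0 < p)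
    (X : Matrix (Fin n) (Fin p) ℝ) (y : Fin n → ℝ)
    (lam : ℝ) (hlam : 0 < lam) (k : Fin n) (ω : ℝ) (hω : ω ∈ Set.Icc (0:ℝ) 1)
    (hcent : ∀ j, ∑ i, X i j = 0)
    (A : Finset (Fin p))
    (XA : Matrix (Fin n) {j // j ∈ A} ℝ)
    (hXA : ∀ i (j : {j // j ∈ A}), XA i j = X i j.1)
    (hinv : IsUnit (XAᵀ * XA).det)
    (sA : {j // j ∈ A} → ℝ) (hsA : ∀ j, sA j = 1 ∨ sA j = -1)
    (betahat : {j // j ∈ A} → ℝ)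
    (hbetahat : betahat = (XAᵀ * XA)⁻¹.mulVec (XAᵀ.mulVec y - lam • sA))
    (beta0hat : ℝ) (hbeta0hat : beta0hat = (∑ i, y i) / n)
    (yhat : Fin n → ℝ) (hyhat : ∀ i, yhat i = beta0hat + ∑ j, XA i j * betahat j)
    (Xt : Matrix (Fin n) (Fin 1 ⊕ {j // j ∈ A}) ℝ)
    (hXt : Xt = Matrix.fromCols (Matrix.of fun _ (_ : Fin 1) => (1:ℝ)) XA)
    (H : Matrix (Fin n) (Fin n) ℝ) (hH : H = Xt * (Xtᵀ * Xt)⁻¹ * Xtᵀ)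
    (hden : 1 - (1 - ω) * H k k ≠ 0) (hnω : (n : ℝ) - 1 + ω ≠ 0)
    (ξ : ℝ) (hξ : ξ = (1 - ω) / (1 - (1 - ω) * H k k))
    (β0ω : ℝ) (βω : Fin p → ℝ)
    (hzero : ∀ j ∉ A, βω j = 0)
    (hd0 : -(∑ i, (y i - β0ω - ∑ j, X i j * βω j))
        + (1 - ω) * (y k - β0ω - ∑ j, X k j * βω j) = 0)
    (hdA : ∀ j : {j // j ∈ A},
        -(∑ i, X i j.1 * (y i - β0ω - ∑ j', X i j' * βω j'))
          + (1 - ω) * X k j.1 * (y k - β0ω - ∑ j', X k j' * βω j') = -lam * sA j) :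
    ∀ i, β0ω + ∑ j, X i j * βω j = yhat i - ξ * H i k * (y k - yhat k) :=
  stmt9_general X y lam k ω hcent A XA hXA hinv sA betahat hbetahat beta0hat hbeta0hat yhat hyhat Xt
    hXt H hH hden ξ hξ β0ω βω hzero hd0 hdA
end

section
/- Let H ∈ ℝ^{n×n} be symmetric and idempotent with h_kk := H_kk ∈ [0,1), let r ∈ ℝ, s > 0, and p a positive integer. Define ξ(ω) = (1−ω)/(1−(1−ω)h_kk) and D(ω) = (1/((p+1)s²)) ‖ξ(ω) H e_k r‖² for ω near 1. Then D is twice differentiable at ω = 1 and (1/2) D″(1) = (1/((p+1)s²)) h_kk r². In particular, the local influence of case k in the Lasso, defined as (1/2) ∂²D_k(λ,ω)/∂ω² at ω = 1, equals h_kk (y_k − ŷ_k)²/((p+1)s²) with r = y_k − ŷ_k. -/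
/-!
Since `H` is symmetric and idempotent, `∑ᵢ H_ik² = (HᵀH)_kk = h_kk`, so
`D = c ξ²` with `c = h_kk r² / ((p+1)s²)`. For any `C²` function `g` vanishing at `a`,
`(c g²)'' (a) = 2 c g'(a)²`, and `ξ(1) = 0`, `ξ'(1) = -1`.
-/

open Filter Topology

theorem Matrix.sum_sq_apply_of_isSymm_of_mul_self {ι R : Type*} [Fintype ι] [CommSemiring R]
    {H : Matrix ι ι R} (hsymm : H.IsSymm) (hidem : H * H = H) (k : ι) :
    ∑ i, H i k ^ 2 = H k k := by
  conv_rhs => rw [← hidem, Matrix.mul_apply]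
  exact Finset.sum_congr rfl fun i _ => by rw [hsymm.apply, sq]

theorem hasDerivAt_deriv_const_mul_sq_of_eq_zero {g : ℝ → ℝ} {a : ℝ} (c : ℝ)
    (hg : ContDiffAt ℝ 2 g a) (ha : g a = 0) :
    HasDerivAt (deriv fun x => c * g x ^ 2) (2 * c * deriv g a ^ 2) a := by
  have hderiv : deriv (fun x => c * g x ^ 2) =ᶠ[𝓝 a] fun x => c * (2 * g x * deriv g x) := by
    filter_upwards [hg.eventually (by simp)] with x hx
    rw [(((hx.differentiableAt (by simp)).hasDerivAt.fun_pow 2).const_mul c).deriv]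
    push_cast
    ring
  have hg' : HasDerivAt g (deriv g a) a := (hg.differentiableAt (by simp)).hasDerivAt
  have hg'' : DifferentiableAt ℝ (deriv g) a :=
    (hg.derivWithin (m := 1) (by norm_num)).differentiableAt (by simp)
  refine ((((hg'.const_mul 2).mul hg''.hasDerivAt).const_mul c).congr_of_eventuallyEq
    hderiv).congr_deriv ?_
  rw [ha]
  ring

section CaseWeight

variable (h : ℝ)

theorem contDiffAt_one_sub_div_one_sub_mul :
    ContDiffAt ℝ 2 (fun ω : ℝ => (1 - ω) / (1 - (1 - ω) * h)) 1 :=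
  (by fun_prop : ContDiffAt ℝ 2 (fun ω : ℝ => 1 - ω) 1).div (by fun_prop) (by norm_num)

theorem hasDerivAt_one_sub_div_one_sub_mul :
    HasDerivAt (fun ω : ℝ => (1 - ω) / (1 - (1 - ω) * h)) (-1) 1 := by
  have hnum : HasDerivAt (fun ω : ℝ => 1 - ω) (-1) 1 := by
    simpa using (hasDerivAt_id (1 : ℝ)).const_sub 1
  simpa using hnum.fun_div ((hnum.mul_const h).const_sub 1) (by norm_num)

end CaseWeight

theorem stmt14_general {n : ℕ} (H : Matrix (Fin n) (Fin n) ℝ)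
    (hsymm : H.IsSymm) (hidem : H * H = H) (k : Fin n)
    (r s : ℝ) (p : ℕ)
    (ξ D : ℝ → ℝ)
    (hξ : ∀ ω, ξ ω = (1 - ω) / (1 - (1 - ω) * H k k))
    (hD : ∀ ω, D ω = (1 / (((p : ℝ) + 1) * s ^ 2)) * ∑ i, (ξ ω * H i k * r) ^ 2) :
    HasDerivAt (deriv D) (2 * ((1 / (((p : ℝ) + 1) * s ^ 2)) * H k k * r ^ 2)) 1 ∧
      (1 / 2) * deriv (deriv D) 1 = (1 / (((p : ℝ) + 1) * s ^ 2)) * H k k * r ^ 2 := by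
  set c := (1 / (((p : ℝ) + 1) * s ^ 2)) * H k k * r ^ 2
  have hξfun : ξ = fun ω => (1 - ω) / (1 - (1 - ω) * H k k) := funext hξ
  have hDfun : D = fun ω => c * ξ ω ^ 2 := by
    funext ω
    simp_rw [hD, mul_pow, ← Finset.sum_mul, ← Finset.mul_sum,
      Matrix.sum_sq_apply_of_isSymm_of_mul_self hsymm hidem, c]
    ring
  have hξ_contDiff : ContDiffAt ℝ 2 ξ 1 := hξfun ▸ contDiffAt_one_sub_div_one_sub_mul _
  have hξ_deriv : deriv ξ 1 = -1 := hξfun ▸ (hasDerivAt_one_sub_div_one_sub_mul _).deriv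
  have hD'' : HasDerivAt (deriv D) (2 * c) 1 := by
    have := hasDerivAt_deriv_const_mul_sq_of_eq_zero c hξ_contDiff (by simp [hξ])
    rwa [hξ_deriv, neg_one_sq, mul_one, ← hDfun] at this
  exact ⟨hD'', by rw [hD''.deriv]; ring⟩

/-- Local influence of case `k` in the Lasso: with `H` symmetric idempotent,
`ξ(ω) = (1-ω)/(1-(1-ω)H_kk)` and
`D(ω) = (1/((p+1)s²)) ‖ξ(ω) H e_k r‖²`, the function `D` is twice differentiable at
`ω = 1` and `(1/2) D″(1) = H_kk r² / ((p+1)s²)`. -/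
theorem stmt14 {n : ℕ} (H : Matrix (Fin n) (Fin n) ℝ)
    (hsymm : H.IsSymm) (hidem : H * H = H) (k : Fin n)
    (hkk : H k k ∈ Set.Ico (0:ℝ) 1)
    (r s : ℝ) (hs : 0 < s) (p : ℕ) (hp : 0 < p)
    (ξ D : ℝ → ℝ)
    (hξ : ∀ ω, ξ ω = (1 - ω) / (1 - (1 - ω) * H k k))
    (hD : ∀ ω, D ω = (1 / (((p : ℝ) + 1) * s ^ 2)) * ∑ i, (ξ ω * H i k * r) ^ 2) :
    HasDerivAt (deriv D) (2 * ((1 / (((p : ℝ) + 1) * s ^ 2)) * H k k * r ^ 2)) 1 ∧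
      (1 / 2) * deriv (deriv D) 1 = (1 / (((p : ℝ) + 1) * s ^ 2)) * H k k * r ^ 2 :=
  stmt14_general H hsymm hidem k r s p ξ D hξ hD
end

section
/- Let H ∈ ℝ^{n×n} be symmetric and idempotent with H_kk ∈ [0,1), let a, c ∈ ℝⁿ, r ∈ ℝ, s > 0, p a positive integer, and let ξ(ω) = (1−ω)/(1−(1−ω)H_kk). Define D̃(t) = (1/((p+1)s²)) ‖a − t·H e_k r − c‖² for t ∈ ℝ. Then the function ω ↦ D̃′(ξ(ω)) is monotonically decreasing on any subinterval of [0,1]. (This is the statement that on each interval (ω_{m+1}, ω_m) between consecutive breakpoints of the case-weight adjusted Lasso path, where the active set and hence the hat matrix H, the base fitted vector a, and the residual factor r are constant, the derivative of the case influence function D_k(λ,ω) with respect to ξ^ω is monotonically decreasing in ω.) -/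
/-!
`D̃` is a quadratic in `t` with nonnegative leading coefficient, so `D̃′` is a nondecreasing affine
function, while `ξ` is a decreasing Möbius transformation of `ω` on `[0, 1]`.
-/

open Finset

theorem monotone_deriv_of_quadratic {f : ℝ → ℝ} {A B C : ℝ}
    (hf : ∀ t, f t = A * t ^ 2 + B * t + C) (hA : 0 ≤ A) : Monotone (deriv f) := by
  have hderiv : ∀ t, deriv f t = 2 * A * t + B := by
    intro t
    have hasDeriv : HasDerivAt (fun t => A * t ^ 2 + B * t + C) (2 * A * t + B) t := by
      refine ((((hasDerivAt_pow 2 t).const_mul A).fun_add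
        ((hasDerivAt_id' t).const_mul B)).add_const C).congr_deriv ?_
      push_cast
      ring
    rw [funext hf, hasDeriv.deriv]
  intro t₁ t₂ h
  simp only [hderiv]
  gcongr

theorem sum_sq_sub_mul_eq_quadratic {ι : Type*} [Fintype ι] (b v : ι → ℝ) (t : ℝ) :
    ∑ i, (b i - t * v i) ^ 2
      = (∑ i, v i ^ 2) * t ^ 2 + (-2 * ∑ i, b i * v i) * t + ∑ i, b i ^ 2 := by
  simp only [mul_sum, sum_mul, ← sum_add_distrib]
  exact sum_congr rfl fun i _ => by ring

theorem antitoneOn_one_sub_div_one_sub_one_sub_mul {h : ℝ} (hh : h < 1) :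
    AntitoneOn (fun ω => (1 - ω) / (1 - (1 - ω) * h)) (Set.Icc 0 1) := by
  have hpos : ∀ ω ∈ Set.Icc (0 : ℝ) 1, 0 < 1 - (1 - ω) * h := by
    rintro ω ⟨hω₀, hω₁⟩
    rcases le_or_gt 0 h with h0 | h0 <;> nlinarith
  intro ω₁ hω₁ ω₂ hω₂ h12
  rw [div_le_div_iff₀ (hpos ω₂ hω₂) (hpos ω₁ hω₁)]
  linarith

theorem stmt15_general {n : ℕ} (H : Matrix (Fin n) (Fin n) ℝ)
    (k : Fin n)
    (hkk : H k k ∈ Set.Ico (0:ℝ) 1)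
    (a c : Fin n → ℝ) (r s : ℝ) (p : ℕ)
    (ξ : ℝ → ℝ) (hξ : ∀ ω, ξ ω = (1 - ω) / (1 - (1 - ω) * H k k))
    (Dt : ℝ → ℝ)
    (hDt : ∀ t, Dt t = (1 / (((p : ℝ) + 1) * s ^ 2)) * ∑ i, (a i - t * H i k * r - c i) ^ 2) :
    AntitoneOn (fun ω => deriv Dt (ξ ω)) (Set.Icc (0:ℝ) 1) := by
  set K : ℝ := 1 / (((p : ℝ) + 1) * s ^ 2)
  set b : Fin n → ℝ := fun i => a i - c i
  set v : Fin n → ℝ := fun i => H i k * r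
  have hquad : ∀ t, Dt t = K * (∑ i, v i ^ 2) * t ^ 2 + K * (-2 * ∑ i, b i * v i) * t
      + K * ∑ i, b i ^ 2 := by
    intro t
    have hsum : ∑ i, (a i - t * H i k * r - c i) ^ 2 = ∑ i, (b i - t * v i) ^ 2 :=
      sum_congr rfl fun i _ => by ring
    rw [hDt, hsum, sum_sq_sub_mul_eq_quadratic]
    ring
  have hmono := monotone_deriv_of_quadratic hquad
    (mul_nonneg (by positivity) (sum_nonneg fun i _ => sq_nonneg (v i)))
  have hξanti : AntitoneOn ξ (Set.Icc 0 1) := by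
    simpa only [← funext hξ] using antitoneOn_one_sub_div_one_sub_one_sub_mul hkk.2
  exact hmono.comp_antitoneOn hξanti

/-- Between breakpoints, the derivative of the case influence function with respect to
`ξ^ω` is monotonically decreasing in `ω`: with `D̃(t) = (1/((p+1)s²)) ‖a - t H e_k r - c‖²`
and `ξ(ω) = (1-ω)/(1-(1-ω)H_kk)`, the map `ω ↦ D̃′(ξ(ω))` is antitone on `[0,1]`. -/
theorem stmt15 {n : ℕ} (H : Matrix (Fin n) (Fin n) ℝ)
    (hsymm : H.IsSymm) (hidem : H * H = H) (k : Fin n)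
    (hkk : H k k ∈ Set.Ico (0:ℝ) 1)
    (a c : Fin n → ℝ) (r s : ℝ) (hs : 0 < s) (p : ℕ) (hp : 0 < p)
    (ξ : ℝ → ℝ) (hξ : ∀ ω, ξ ω = (1 - ω) / (1 - (1 - ω) * H k k))
    (Dt : ℝ → ℝ)
    (hDt : ∀ t, Dt t = (1 / (((p : ℝ) + 1) * s ^ 2)) * ∑ i, (a i - t * H i k * r - c i) ^ 2) :
    AntitoneOn (fun ω => deriv Dt (ξ ω)) (Set.Icc (0:ℝ) 1) :=
  stmt15_general H k hkk a c r s p ξ hξ Dt hDt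
end
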